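/- The finite sets of vectors {v_1(i,j,k) : j≠k ∈ [10], i ∈ [10]} with pairwise inner products in {0,1} and maximal cardinality correspond bijectively to tuples (Y_1,…,Y_{10}) of pairwise disjoint matchings of K_{10} covering all edges, via φ ↦ ({{j,k} : v_1(i,j,k) ∈ φ})_{i=1}^{10}; consequently every such maximum set has cardinality exactly 45. -/
import Mathlib


noncomputable section

/-- The ambient space ℝ¹⁰ ⊕ ℝ¹⁰ ⊕ ℝ². -/
abbrev V : Type := (Fin 10 → ℝ) × (Fin 10 → ℝ) × (Fin 2 → ℝ)

/-- The standard inner product on ℝ¹⁰ ⊕ ℝ¹⁰ ⊕ ℝ². -/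
def ip (x y : V) : ℝ :=
  (∑ t, x.1 t * y.1 t) + (∑ t, x.2.1 t * y.2.1 t) + (∑ t, x.2.2 t * y.2.2 t)

/-- α₁ = (1/2, −1/2). -/
def α1 : Fin 2 → ℝ := fun i => if (i : ℕ) = 1 then -(1 / 2) else 1 / 2

/-- v₁(i,j,k) = ((1/10)𝟏 − eᵢ, (2/10)𝟏 − eⱼ − e_k, α₁). -/
def v1 (i j k : Fin 10) : V :=
  ((fun t => 1 / 10 - if t = i then 1 else 0),
   (fun t => 2 / 10 - (if t = j then (1 : ℝ) else 0) - (if t = k then 1 else 0)),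
   α1)

/-- v₅(I) = ((1/2)𝟏 − Σ_{i∈I} eᵢ, 0, α₁). -/
def v5 (I : Finset (Fin 10)) : V :=
  ((fun t => 1 / 2 - if t ∈ I then 1 else 0), 0, α1)


/-- A matching of K₁₀ as a set of non-loop edges that are pairwise vertex-disjoint. -/
def IsMatchingS (M : Set (Sym2 (Fin 10))) : Prop :=
  (∀ e ∈ M, ¬ e.IsDiag) ∧
  ∀ e ∈ M, ∀ e' ∈ M, e ≠ e' → ∀ v : Fin 10, v ∈ e → v ∉ e'

/-- A tuple of 10 pairwise disjoint matchings of K₁₀ covering all edges. -/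
def GoodTuple (Y : Fin 10 → Set (Sym2 (Fin 10))) : Prop :=
  (∀ i, IsMatchingS (Y i)) ∧
  (∀ i j, i ≠ j → Disjoint (Y i) (Y j)) ∧
  (⋃ i, Y i) = {e : Sym2 (Fin 10) | ¬ e.IsDiag}

/-- A finite set of vectors of the form v₁(i,j,k) (j ≠ k) with pairwise inner products
in {0,1}. -/
def GoodSet (φ : Finset V) : Prop :=
  (∀ u ∈ φ, ∃ i j k : Fin 10, j ≠ k ∧ u = v1 i j k) ∧
  ∀ u ∈ φ, ∀ v ∈ φ, u ≠ v → ip u v = 0 ∨ ip u v = 1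

/-- The map φ ↦ ({{j,k} : v₁(i,j,k) ∈ φ})_{i=1}^{10}. -/
def Yof (φ : Finset V) : Fin 10 → Set (Sym2 (Fin 10)) := fun i =>
  {e | ∃ j k : Fin 10, j ≠ k ∧ e = s(j, k) ∧ v1 i j k ∈ φ}

/-! ### Auxiliary lemmas -/

noncomputable instance : DecidableEq V := Classical.decEq V

lemma sum_ii (i i' : Fin 10) :
    ∑ t : Fin 10, (if t = i then (1:ℝ) else 0) * (if t = i' then 1 else 0)
      = if i = i' then 1 else 0 := by
  simp [ite_and, Finset.sum_ite_eq', eq_comm]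

lemma ip_v1 (i j k i' j' k' : Fin 10) :
    ip (v1 i j k) (v1 i' j' k') =
      (if i = i' then (1:ℝ) else 0) +
      ((if j = j' then (1:ℝ) else 0) + (if j = k' then 1 else 0) +
       ((if k = j' then 1 else 0) + (if k = k' then 1 else 0))) := by
  unfold ip v1 α1
  simp only [sub_mul, mul_sub, Finset.sum_sub_distrib, Finset.mul_sum, Finset.sum_ite_eq',
    Finset.mem_univ, if_true, Finset.sum_const, Finset.card_univ, Fintype.card_fin,
    nsmul_eq_mul, sum_ii, Fin.sum_univ_two]
  norm_num
  ring

/-- The number of common endpoints of the edges {j,k} and {j',k'}. -/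
def N (j k j' k' : Fin 10) : ℕ :=
  (if j = j' then 1 else 0) + (if j = k' then 1 else 0) +
    ((if k = j' then 1 else 0) + (if k = k' then 1 else 0))

lemma ip_v1N (i j k i' j' k' : Fin 10) :
    ip (v1 i j k) (v1 i' j' k') = (((if i = i' then 1 else 0) + N j k j' k' : ℕ) : ℝ) := by
  rw [ip_v1]; unfold N; push_cast [apply_ite (Nat.cast : ℕ → ℝ)]; ring

lemma N_eq_two_of_edge_eq {j k j' k' : Fin 10} (hjk : j ≠ k) (h : s(j, k) = s(j', k')) :
    N j k j' k' = 2 := by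
  rw [Sym2.eq_iff] at h; unfold N
  rcases h with ⟨rfl, rfl⟩ | ⟨rfl, rfl⟩ <;> simp [hjk, Ne.symm hjk]

lemma edge_eq_of_N_ge_two {j k j' k' : Fin 10} (hjk : j ≠ k) (hj'k' : j' ≠ k')
    (h : 2 ≤ N j k j' k') : s(j, k) = s(j', k') := by
  unfold N at h
  by_cases h1 : j = j' <;> by_cases h2 : j = k' <;> by_cases h3 : k = j' <;>
    by_cases h4 : k = k' <;> subst_vars <;> simp_all [Sym2.eq_iff]

lemma N_eq_zero_iff {j k j' k' : Fin 10} :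
    N j k j' k' = 0 ↔ j ≠ j' ∧ j ≠ k' ∧ k ≠ j' ∧ k ≠ k' := by
  unfold N
  by_cases h1 : j = j' <;> by_cases h2 : j = k' <;> by_cases h3 : k = j' <;>
    by_cases h4 : k = k' <;> simp_all

lemma v1_symm (i j k : Fin 10) : v1 i j k = v1 i k j := by
  unfold v1; refine Prod.ext rfl (Prod.ext ?_ rfl)
  funext t; dsimp; ring

lemma v1_edge {j k j' k' : Fin 10} (i : Fin 10) (h : s(j, k) = s(j', k')) :
    v1 i j k = v1 i j' k' := by
  rw [Sym2.eq_iff] at h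
  rcases h with ⟨rfl, rfl⟩ | ⟨h1, h2⟩
  · rfl
  · subst h1; subst h2; exact v1_symm _ _ _

lemma v1_inj {i j k i' j' k' : Fin 10} (hjk : j ≠ k) (hj'k' : j' ≠ k')
    (h : v1 i j k = v1 i' j' k') : i = i' ∧ s(j, k) = s(j', k') := by
  have h1 := congrFun (congrArg Prod.fst h) i
  have h2 := congrFun (congrArg (fun x : V => x.2.1) h) j
  have h3 := congrFun (congrArg (fun x : V => x.2.1) h) k
  simp only [v1] at h1 h2 h3
  constructor
  · by_contra hii
    simp [hii] at h1
  · rw [if_neg hjk] at h2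
    rw [if_neg (Ne.symm hjk)] at h3
    by_cases e1 : j = j'
    · subst e1
      by_cases e2 : k = k'
      · subst e2; rfl
      · exfalso; rw [if_neg e2] at h3; norm_num at h3
        rw [if_neg (Ne.symm hjk)] at h3; norm_num at h3
    · have e1' : j = k' := by
        by_contra e2; norm_num [e1, e2] at h2
      subst e1'
      have e2 : k = j' := by
        by_contra e2; rw [if_neg e2] at h3; norm_num at h3
        split_ifs at h3 with hkj
        · exact hjk hkj.symm
        · linarith
      subst e2
      rw [Sym2.eq_swap]

/-- Canonical edge of a vector of the form `v1 i j k`. -/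
def eOf (u : V) : Sym2 (Fin 10) :=
  if h : ∃ p : Fin 10 × Fin 10 × Fin 10, p.2.1 ≠ p.2.2 ∧ u = v1 p.1 p.2.1 p.2.2 then
    s(h.choose.2.1, h.choose.2.2) else s(0, 0)

lemma eOf_v1 {i j k : Fin 10} (hjk : j ≠ k) : eOf (v1 i j k) = s(j, k) := by
  have h : ∃ p : Fin 10 × Fin 10 × Fin 10, p.2.1 ≠ p.2.2 ∧ v1 i j k = v1 p.1 p.2.1 p.2.2 :=
    ⟨(i, j, k), hjk, rfl⟩
  rw [eOf, dif_pos h]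
  obtain ⟨hne, heq⟩ := h.choose_spec
  exact (v1_inj hne hjk heq.symm).2

/-- The 45 non-loop edges of K₁₀. -/
def edges10 : Finset (Sym2 (Fin 10)) := Finset.univ.filter fun e => ¬ e.IsDiag

lemma card_edges10 : edges10.card = 45 := by
  rw [edges10, ← Fintype.card_subtype, Sym2.card_subtype_not_diag]
  decide

lemma goodSet_injOn_eOf {φ : Finset V} (hφ : GoodSet φ) : Set.InjOn eOf φ := by
  intro u hu v hv he
  obtain ⟨i, j, k, hjk, rfl⟩ := hφ.1 u hu
  obtain ⟨i', j', k', hj'k', rfl⟩ := hφ.1 v hv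
  by_contra hne
  have hip := hφ.2 _ hu _ hv hne
  rw [eOf_v1 hjk, eOf_v1 hj'k'] at he
  rw [ip_v1N, N_eq_two_of_edge_eq hjk he] at hip
  rcases hip with h | h
  · have h' : ((if i = i' then 1 else 0) + 2 : ℕ) = 0 := by exact_mod_cast h
    omega
  · have h' : ((if i = i' then 1 else 0) + 2 : ℕ) = 1 := by exact_mod_cast h
    omega

lemma eOf_mem_edges {φ : Finset V} (hφ : GoodSet φ) {u : V} (hu : u ∈ φ) :
    eOf u ∈ edges10 := by
  obtain ⟨i, j, k, hjk, rfl⟩ := hφ.1 u hu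
  rw [eOf_v1 hjk]
  simp [edges10, Sym2.mk_isDiag_iff, hjk]

lemma image_eOf_subset {φ : Finset V} (hφ : GoodSet φ) : φ.image eOf ⊆ edges10 := by
  intro e he
  obtain ⟨u, hu, rfl⟩ := Finset.mem_image.mp he
  exact eOf_mem_edges hφ hu

lemma goodSet_card_le {φ : Finset V} (hφ : GoodSet φ) : φ.card ≤ 45 := by
  calc φ.card = (φ.image eOf).card := (Finset.card_image_of_injOn (goodSet_injOn_eOf hφ)).symm
    _ ≤ edges10.card := Finset.card_le_card (image_eOf_subset hφ)
    _ = 45 := card_edges10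

lemma image_eOf_full {φ : Finset V} (hφ : GoodSet φ) (hc : 45 ≤ φ.card) :
    φ.image eOf = edges10 := by
  apply Finset.eq_of_subset_of_card_le (image_eOf_subset hφ)
  rw [card_edges10, Finset.card_image_of_injOn (goodSet_injOn_eOf hφ)]
  exact hc

lemma mem_Yof {φ : Finset V} {i j k : Fin 10} (hjk : j ≠ k) :
    s(j, k) ∈ Yof φ i ↔ v1 i j k ∈ φ := by
  constructor
  · rintro ⟨j', k', hj'k', heq, hm⟩
    rwa [v1_edge i heq]
  · intro h
    exact ⟨j, k, hjk, rfl, h⟩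

/-! ### An explicit 1-factorization of K₁₀ (round robin colouring) -/

def colf (a b : Fin 10) : Fin 10 :=
  ⟨if a.val = 9 then 2 * b.val % 9 else if b.val = 9 then 2 * a.val % 9 else (a.val + b.val) % 9,
   by split_ifs <;> omega⟩

lemma col_symm (a b : Fin 10) : colf a b = colf b a := by revert a b; decide

lemma col_ne' : ∀ j k j' k' : Fin 10, j ≠ k → j' ≠ k' →
    ¬((j = j' ∧ k = k') ∨ (j = k' ∧ k = j')) → N j k j' k' ≠ 0 →
    colf j k ≠ colf j' k' := by decide

lemma col_edge {j k j' k' : Fin 10} (h : s(j, k) = s(j', k')) : colf j k = colf j' k' := by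
  rw [Sym2.eq_iff] at h
  rcases h with ⟨rfl, rfl⟩ | ⟨rfl, rfl⟩
  · rfl
  · exact col_symm _ _

/-- The explicit good set of cardinality 45. -/
def φ45 : Finset V :=
  (Finset.univ.filter fun p : Fin 10 × Fin 10 => p.1 ≠ p.2).image
    fun p => v1 (colf p.1 p.2) p.1 p.2

lemma mem_φ45 {u : V} : u ∈ φ45 ↔ ∃ j k : Fin 10, j ≠ k ∧ u = v1 (colf j k) j k := by
  simp only [φ45, Finset.mem_image, Finset.mem_filter, Finset.mem_univ, true_and]
  constructor
  · rintro ⟨⟨j, k⟩, hjk, rfl⟩; exact ⟨j, k, hjk, rfl⟩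
  · rintro ⟨j, k, hjk, rfl⟩; exact ⟨(j, k), hjk, rfl⟩

lemma goodSet_φ45 : GoodSet φ45 := by
  constructor
  · intro u hu
    obtain ⟨j, k, hjk, rfl⟩ := mem_φ45.mp hu
    exact ⟨colf j k, j, k, hjk, rfl⟩
  · intro u hu v hv hne
    obtain ⟨j, k, hjk, rfl⟩ := mem_φ45.mp hu
    obtain ⟨j', k', hj'k', rfl⟩ := mem_φ45.mp hv
    have hedge : s(j, k) ≠ s(j', k') := by
      intro h
      exact hne ((col_edge h) ▸ v1_edge _ h)
    have hN : N j k j' k' ≤ 1 := by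
      by_contra h
      exact hedge (edge_eq_of_N_ge_two hjk hj'k' (by omega))
    rw [ip_v1N]
    rcases Nat.le_one_iff_eq_zero_or_eq_one.mp hN with h0 | h1
    · rw [h0]
      split_ifs with h
      · right; norm_num
      · left; norm_num
    · rw [h1]
      have hcol : colf j k ≠ colf j' k' := by
        apply col_ne' j k j' k' hjk hj'k'
        · rw [← Sym2.eq_iff]; exact hedge
        · omega
      rw [if_neg hcol]
      right; norm_num

lemma card_φ45 : φ45.card = 45 := by
  have himg : φ45.image eOf = edges10 := by
    apply Finset.Subset.antisymm (image_eOf_subset goodSet_φ45)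
    intro e he
    obtain ⟨j, k, rfl⟩ : ∃ j k, e = s(j, k) := by
      induction e using Sym2.ind with
      | _ j k => exact ⟨j, k, rfl⟩
    have hjk : j ≠ k := by
      simpa [edges10, Sym2.mk_isDiag_iff] using he
    exact Finset.mem_image.mpr
      ⟨v1 (colf j k) j k, mem_φ45.mpr ⟨j, k, hjk, rfl⟩, eOf_v1 hjk⟩
  calc φ45.card = (φ45.image eOf).card :=
        (Finset.card_image_of_injOn (goodSet_injOn_eOf goodSet_φ45)).symm
    _ = 45 := by rw [himg, card_edges10]

lemma max_card_45 {φ : Finset V} (hφ : GoodSet φ)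
    (hmax : ∀ φ' : Finset V, GoodSet φ' → φ'.card ≤ φ.card) : φ.card = 45 :=
  le_antisymm (goodSet_card_le hφ) (card_φ45 ▸ hmax φ45 goodSet_φ45)

/-! ### The map Yof sends maximum good sets to good tuples -/

lemma goodTuple_Yof {φ : Finset V} (hφ : GoodSet φ)
    (hmax : ∀ φ' : Finset V, GoodSet φ' → φ'.card ≤ φ.card) : GoodTuple (Yof φ) := by
  have hcard : φ.card = 45 := max_card_45 hφ hmax
  have himg : φ.image eOf = edges10 := image_eOf_full hφ (by omega)
  refine ⟨?_, ?_, ?_⟩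
  · intro i
    constructor
    · rintro e ⟨j, k, hjk, rfl, hm⟩
      simpa [Sym2.mk_isDiag_iff] using hjk
    · rintro e ⟨j, k, hjk, rfl, hm⟩ e' ⟨j', k', hj'k', rfl, hm'⟩ hne v hv hv'
      have hvne : v1 i j k ≠ v1 i j' k' := fun h => hne ((v1_inj hjk hj'k' h).2)
      have hip := hφ.2 _ hm _ hm' hvne
      rw [ip_v1N, if_pos rfl] at hip
      have hN : N j k j' k' = 0 := by
        rcases hip with h | h
        · have h' : (1 + N j k j' k' : ℕ) = 0 := by exact_mod_cast h
          omega
        · have h' : (1 + N j k j' k' : ℕ) = 1 := by exact_mod_cast h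
          omega
      obtain ⟨n1, n2, n3, n4⟩ := N_eq_zero_iff.mp hN
      rw [Sym2.mem_iff] at hv hv'
      rcases hv with rfl | rfl <;> rcases hv' with h | h
      · exact n1 h
      · exact n2 h
      · exact n3 h
      · exact n4 h
  · intro i i' hii
    rw [Set.disjoint_left]
    rintro e ⟨j, k, hjk, rfl, hm⟩ ⟨j', k', hj'k', heq, hm'⟩
    have hvne : v1 i j k ≠ v1 i' j' k' := fun h => hii (v1_inj hjk hj'k' h).1
    have hip := hφ.2 _ hm _ hm' hvne
    rw [ip_v1N, if_neg hii, N_eq_two_of_edge_eq hjk heq] at hip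
    norm_num at hip
  · ext e
    simp only [Set.mem_iUnion, Set.mem_setOf_eq]
    constructor
    · rintro ⟨i, j, k, hjk, rfl, hm⟩
      simpa [Sym2.mk_isDiag_iff] using hjk
    · intro he
      have : e ∈ φ.image eOf := by
        rw [himg]; simp [edges10, he]
      obtain ⟨u, hu, rfl⟩ := Finset.mem_image.mp this
      obtain ⟨i, j, k, hjk, rfl⟩ := hφ.1 u hu
      rw [eOf_v1 hjk]
      exact ⟨i, j, k, hjk, rfl, hu⟩

/-! ### The inverse construction -/

def phiY (Y : Fin 10 → Set (Sym2 (Fin 10))) : Finset V :=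
  ((Set.toFinite {p : Fin 10 × Fin 10 × Fin 10 | p.2.1 ≠ p.2.2 ∧ s(p.2.1, p.2.2) ∈ Y p.1}).image
    (fun p => v1 p.1 p.2.1 p.2.2)).toFinset

lemma mem_phiY {Y : Fin 10 → Set (Sym2 (Fin 10))} {u : V} :
    u ∈ phiY Y ↔ ∃ i j k : Fin 10, j ≠ k ∧ s(j, k) ∈ Y i ∧ u = v1 i j k := by
  simp only [phiY, Set.Finite.mem_toFinset, Set.mem_image, Set.mem_setOf_eq]
  constructor
  · rintro ⟨⟨i, j, k⟩, ⟨hjk, hm⟩, rfl⟩; exact ⟨i, j, k, hjk, hm, rfl⟩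
  · rintro ⟨i, j, k, hjk, hm, rfl⟩; exact ⟨(i, j, k), ⟨hjk, hm⟩, rfl⟩

lemma goodSet_phiY {Y : Fin 10 → Set (Sym2 (Fin 10))} (hY : GoodTuple Y) :
    GoodSet (phiY Y) := by
  constructor
  · intro u hu
    obtain ⟨i, j, k, hjk, hm, rfl⟩ := mem_phiY.mp hu
    exact ⟨i, j, k, hjk, rfl⟩
  · intro u hu v hv hne
    obtain ⟨i, j, k, hjk, hm, rfl⟩ := mem_phiY.mp hu
    obtain ⟨i', j', k', hj'k', hm', rfl⟩ := mem_phiY.mp hv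
    rw [ip_v1N]
    by_cases hii : i = i'
    · subst hii
      have hedge : s(j, k) ≠ s(j', k') := fun h => hne (v1_edge i h)
      have hnov := (hY.1 i).2 _ hm _ hm' hedge
      have hN : N j k j' k' = 0 := by
        rw [N_eq_zero_iff]
        refine ⟨?_, ?_, ?_, ?_⟩ <;> intro h <;> subst h
        · exact hnov j (Sym2.mem_mk_left j k) (Sym2.mem_mk_left j k')
        · exact hnov j (Sym2.mem_mk_left j k) (Sym2.mem_mk_right j' j)
        · exact hnov k (Sym2.mem_mk_right j k) (Sym2.mem_mk_left k k')
        · exact hnov k (Sym2.mem_mk_right j k) (Sym2.mem_mk_right j' k)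
      rw [hN, if_pos rfl]
      right; norm_num
    · have hedge : s(j, k) ≠ s(j', k') := by
        intro h
        exact Set.disjoint_left.mp (hY.2.1 i i' hii) hm (h ▸ hm')
      have hN : N j k j' k' ≤ 1 := by
        by_contra h
        exact hedge (edge_eq_of_N_ge_two hjk hj'k' (by omega))
      rw [if_neg hii]
      rcases Nat.le_one_iff_eq_zero_or_eq_one.mp hN with h0 | h1
      · rw [h0]; left; norm_num
      · rw [h1]; right; norm_num

lemma Yof_phiY {Y : Fin 10 → Set (Sym2 (Fin 10))} (hY : GoodTuple Y) :
    Yof (phiY Y) = Y := by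
  funext i
  ext e
  constructor
  · rintro ⟨j, k, hjk, rfl, hm⟩
    obtain ⟨i', j', k', hj'k', hYm, heq⟩ := mem_phiY.mp hm
    obtain ⟨rfl, hs⟩ := v1_inj hjk hj'k' heq
    rwa [hs]
  · intro he
    have hd : ¬ e.IsDiag := (hY.1 i).1 e he
    obtain ⟨j, k, rfl⟩ : ∃ j k, e = s(j, k) := by
      induction e using Sym2.ind with
      | _ j k => exact ⟨j, k, rfl⟩
    have hjk : j ≠ k := by simpa [Sym2.mk_isDiag_iff] using hd
    exact ⟨j, k, hjk, rfl, mem_phiY.mpr ⟨i, j, k, hjk, he, rfl⟩⟩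

lemma card_phiY {Y : Fin 10 → Set (Sym2 (Fin 10))} (hY : GoodTuple Y) :
    (phiY Y).card = 45 := by
  have hgs := goodSet_phiY hY
  have himg : (phiY Y).image eOf = edges10 := by
    apply Finset.Subset.antisymm (image_eOf_subset hgs)
    intro e he
    obtain ⟨j, k, rfl⟩ : ∃ j k, e = s(j, k) := by
      induction e using Sym2.ind with
      | _ j k => exact ⟨j, k, rfl⟩
    have hjk : j ≠ k := by
      simpa [edges10, Sym2.mk_isDiag_iff] using he
    have : s(j, k) ∈ ⋃ i, Y i := by
      rw [hY.2.2]
      simpa [Sym2.mk_isDiag_iff] using hjk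
    obtain ⟨i, hi⟩ := Set.mem_iUnion.mp this
    exact Finset.mem_image.mpr
      ⟨v1 i j k, mem_phiY.mpr ⟨i, j, k, hjk, hi, rfl⟩, eOf_v1 hjk⟩
  calc (phiY Y).card = ((phiY Y).image eOf).card :=
        (Finset.card_image_of_injOn (goodSet_injOn_eOf hgs)).symm
    _ = 45 := by rw [himg, card_edges10]

theorem stmt18 :
    Set.BijOn Yof
      {φ : Finset V | GoodSet φ ∧ ∀ φ' : Finset V, GoodSet φ' → φ'.card ≤ φ.card}
      {Y | GoodTuple Y} ∧
    (∀ φ : Finset V, GoodSet φ → (∀ φ' : Finset V, GoodSet φ' → φ'.card ≤ φ.card) →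
      φ.card = 45) := by
  constructor
  · refine ⟨?_, ?_, ?_⟩
    · rintro φ ⟨hφ, hmax⟩
      exact goodTuple_Yof hφ hmax
    · rintro φ ⟨hφ, _⟩ φ' ⟨hφ', _⟩ hEq
      ext u
      constructor
      · intro hu
        obtain ⟨i, j, k, hjk, rfl⟩ := hφ.1 u hu
        exact (mem_Yof hjk).mp (hEq ▸ (mem_Yof hjk).mpr hu)
      · intro hu
        obtain ⟨i, j, k, hjk, rfl⟩ := hφ'.1 u hu
        exact (mem_Yof hjk).mp (hEq ▸ (mem_Yof hjk).mpr hu)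
    · intro Y hY
      refine ⟨phiY Y, ⟨⟨goodSet_phiY hY, ?_⟩, Yof_phiY hY⟩⟩
      intro φ' hφ'
      rw [card_phiY hY]
      exact goodSet_card_le hφ'
  · exact fun φ hφ hmax => max_card_45 hφ hmax

end
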